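/- Let H be a Hilbert space, P(ξ) a smooth family of finite-rank orthogonal projections on H indexed by ξ ∈ ℝ², and suppose there are: (a) an antiunitary operator C with C P(ξ) C⁻¹ = P(−ξ), and (b) a unitary operator I with I P(ξ) I⁻¹ = P(−ξ). Then the Berry curvature trace B(ξ) = Tr(P(ξ)[∂₁P(ξ), ∂₂P(ξ)]) vanishes identically. -/

import Mathlib

/-!
Composing the antiunitary `C` with the unitary `J⁻¹` gives an antiunitary `K` commuting with
every `P(ξ)`, hence with the derivatives of `P` and with `P(ξ)[∂₁P(ξ), ∂₂P(ξ)]`; computing the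
trace in the orthonormal basis `(K bᵢ)` shows that `B(ξ)` is real. On the other hand `P` and its
derivatives are self-adjoint, so the adjoint of `P[∂₁P, ∂₂P]` is `[∂₂P, ∂₁P]P`, and cyclicity of
the trace shows that `B(ξ)` is purely imaginary.
-/

open scoped InnerProductSpace ComplexConjugate

/-- The trace of the Berry curvature `B(ξ) = Tr(P(ξ)[∂₁P(ξ), ∂₂P(ξ)])` of a family of
projections `P` on a Hilbert space, indexed by `ξ ∈ ℝ²`. -/
noncomputable def berryTrace {H : Type*} [NormedAddCommGroup H] [InnerProductSpace ℂ H]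
    (P : ℝ × ℝ → H →L[ℂ] H) (ξ : ℝ × ℝ) : ℂ :=
  LinearMap.trace ℂ H
    ((P ξ ∘L (fderiv ℝ P ξ (1, 0) ∘L fderiv ℝ P ξ (0, 1) -
        fderiv ℝ P ξ (0, 1) ∘L fderiv ℝ P ξ (1, 0))).toLinearMap)

section Antiunitary

variable {E E' : Type*} [NormedAddCommGroup E] [InnerProductSpace ℂ E]
  [NormedAddCommGroup E'] [InnerProductSpace ℂ E']

open Complex in
theorem LinearIsometryEquiv.antiunitary_inner_map_map (K : E ≃ₛₗᵢ[starRingEnd ℂ] E') (x y : E) :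
    ⟪K x, K y⟫_ℂ = ⟪y, x⟫_ℂ := by
  have hI : ∀ z : E, K (I • z) = -(I • K z) := fun z => by
    rw [K.map_smulₛₗ, conj_I, neg_smul]
  have hI_smul : ∀ a b : E, ‖I • a + b‖ = ‖a - I • b‖ := fun a b => by
    rw [← one_mul ‖a - I • b‖, ← norm_I, ← norm_smul, smul_sub, smul_smul, I_mul_I, neg_one_smul,
      sub_neg_eq_add]
  have h₁ : ‖y + I • x‖ = ‖x - I • y‖ := by rw [add_comm, hI_smul]
  have h₂ : ‖y - I • x‖ = ‖x + I • y‖ := by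
    rw [← norm_neg, neg_sub, sub_eq_add_neg, hI_smul, smul_neg, sub_neg_eq_add]
  apply Complex.ext
  · rw [← RCLike.re_to_complex, ← RCLike.re_to_complex,
      re_inner_eq_norm_add_mul_self_sub_norm_sub_mul_self_div_four,
      re_inner_eq_norm_add_mul_self_sub_norm_sub_mul_self_div_four, ← map_add, ← map_sub,
      K.norm_map, K.norm_map, add_comm y x, ← norm_neg (y - x), neg_sub]
  · rw [← RCLike.im_to_complex, ← RCLike.im_to_complex,
      im_inner_eq_norm_sub_i_smul_mul_self_sub_norm_add_i_smul_mul_self_div_four,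
      im_inner_eq_norm_sub_i_smul_mul_self_sub_norm_add_i_smul_mul_self_div_four]
    simp only [RCLike.I_to_complex]
    rw [sub_eq_add_neg (K x), ← hI, ← map_add, ← sub_neg_eq_add (K x), ← hI, ← map_sub,
      K.norm_map, K.norm_map, h₁, h₂]

noncomputable def OrthonormalBasis.mapAntiunitary {ι : Type*} [Fintype ι]
    (b : OrthonormalBasis ι ℂ E) (K : E ≃ₛₗᵢ[starRingEnd ℂ] E') : OrthonormalBasis ι ℂ E' :=
  OrthonormalBasis.mk (v := K ∘ b)
    ⟨fun i => by simp, fun i j hij => by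
      simp [K.antiunitary_inner_map_map, b.orthonormal.2 hij.symm]⟩
    (by
      have hspan := Submodule.map_span (K.toLinearEquiv : E →ₛₗ[starRingEnd ℂ] E') (Set.range b)
      rw [← b.coe_toBasis, b.toBasis.span_eq, Submodule.map_top,
        LinearMap.range_eq_top.mpr K.surjective] at hspan
      rw [Set.range_comp]
      exact hspan.le)

@[simp]
theorem OrthonormalBasis.coe_mapAntiunitary {ι : Type*} [Fintype ι]
    (b : OrthonormalBasis ι ℂ E) (K : E ≃ₛₗᵢ[starRingEnd ℂ] E') :
    ⇑(b.mapAntiunitary K) = K ∘ b :=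
  OrthonormalBasis.coe_mk _ _

theorem LinearMap.conj_trace_eq_of_antiunitary_comm [FiniteDimensional ℂ E]
    (K : E ≃ₛₗᵢ[starRingEnd ℂ] E) (A : E →ₗ[ℂ] E) (hKA : ∀ x, K (A x) = A (K x)) :
    conj (trace ℂ E A) = trace ℂ E A := by
  set b := stdOrthonormalBasis ℂ E
  conv_rhs => rw [trace_eq_sum_inner A (b.mapAntiunitary K)]
  rw [trace_eq_sum_inner A b, map_sum]
  refine Finset.sum_congr rfl fun i _ => ?_
  rw [OrthonormalBasis.coe_mapAntiunitary, Function.comp_apply, ← hKA,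
    K.antiunitary_inner_map_map, inner_conj_symm]

end Antiunitary

theorem LinearMap.trace_eq_zero_of_not_finiteDimensional {K V : Type*} [Field K] [AddCommGroup V]
    [Module K V] (hV : ¬ FiniteDimensional K V) : trace K V = 0 := by
  classical
  rw [trace, dif_neg]
  rintro ⟨s, ⟨b⟩⟩
  exact hV (Module.Finite.of_basis b)

namespace ContinuousLinearMap

variable {𝕜 E : Type*} [RCLike 𝕜] [NormedAddCommGroup E] [InnerProductSpace 𝕜 E] [CompleteSpace E]
  [FiniteDimensional 𝕜 E]

theorem trace_star (A : E →L[𝕜] E) :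
    LinearMap.trace 𝕜 E (star A).toLinearMap = conj (LinearMap.trace 𝕜 E A.toLinearMap) := by
  set b := stdOrthonormalBasis 𝕜 E
  rw [LinearMap.trace_eq_sum_inner _ b, LinearMap.trace_eq_sum_inner _ b, map_sum]
  refine Finset.sum_congr rfl fun i _ => ?_
  rw [coe_coe, coe_coe, star_eq_adjoint, adjoint_inner_right, inner_conj_symm]

theorem conj_trace_mul_commutator {P X Y : E →L[𝕜] E} (hP : IsSelfAdjoint P)
    (hX : IsSelfAdjoint X) (hY : IsSelfAdjoint Y) :
    conj (LinearMap.trace 𝕜 E (P * (X * Y - Y * X)).toLinearMap) =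
      -LinearMap.trace 𝕜 E (P * (X * Y - Y * X)).toLinearMap := by
  have hstar : star (P * (X * Y - Y * X)) = (Y * X - X * Y) * P := by
    rw [star_mul, star_sub, star_mul, star_mul, hP.star_eq, hX.star_eq, hY.star_eq]
  rw [← trace_star, hstar, toLinearMap_mul, LinearMap.trace_mul_comm, ← toLinearMap_mul, ← neg_sub,
    mul_neg, toLinearMap_neg, map_neg]

end ContinuousLinearMap

theorem isSelfAdjoint_fderiv_apply {𝕜 E F : Type*} [NontriviallyNormedField 𝕜] [StarRing 𝕜]
    [TrivialStar 𝕜] [NormedAddCommGroup E] [NormedSpace 𝕜 E] [NormedAddCommGroup F]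
    [NormedSpace 𝕜 F] [StarAddMonoid F] [ContinuousStar F] [StarModule 𝕜 F] {f : E → F}
    (hf : ∀ x, IsSelfAdjoint (f x)) (x v : E) : IsSelfAdjoint (fderiv 𝕜 f x v) := by
  have h := congrArg (fun L : E →L[𝕜] F => L v) (fderiv_star (𝕜 := 𝕜) (f := f) (x := x))
  simp only [fun y => (hf y).star_eq] at h
  exact h.symm

theorem fderiv_apply_comm_of_forall_comm {E H : Type*} [NormedAddCommGroup E] [NormedSpace ℝ E]
    [NormedAddCommGroup H] [NormedSpace ℂ H] {P : E → H →L[ℂ] H} {ξ : E}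
    (hP : DifferentiableAt ℝ P ξ) (K : H →L[ℝ] H) (hK : ∀ η x, K (P η x) = P η (K x))
    (v : E) (x : H) : K (fderiv ℝ P ξ v x) = fderiv ℝ P ξ v (K x) := by
  have hev : ∀ y, HasFDerivAt (fun η => P η y)
      (((ContinuousLinearMap.apply ℂ H y).restrictScalars ℝ).comp (fderiv ℝ P ξ)) ξ :=
    fun y => ((ContinuousLinearMap.apply ℂ H y).restrictScalars ℝ).hasFDerivAt.comp ξ
      hP.hasFDerivAt
  have hfun : (K ∘ fun η => P η x) = fun η => P η (K x) := funext fun η => hK η x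
  have h := (hfun ▸ K.hasFDerivAt.comp ξ (hev x)).unique (hev (K x))
  exact congrArg (fun L : E →L[ℝ] H => L v) h

theorem berryTrace_eq_zero_of_symmetries_general {H : Type*} [NormedAddCommGroup H]
    [InnerProductSpace ℂ H] [CompleteSpace H]
    (P : ℝ × ℝ → H →L[ℂ] H)
    (hsa : ∀ ξ, IsSelfAdjoint (P ξ))
    (hdiff : Differentiable ℝ P)
    (C : H ≃ₛₗᵢ[starRingEnd ℂ] H)
    (hC : ∀ ξ x, C (P ξ x) = P (-ξ) (C x))
    (J : H ≃ₗᵢ[ℂ] H)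
    (hJ : ∀ ξ x, J (P ξ x) = P (-ξ) (J x)) :
    ∀ ξ : ℝ × ℝ, berryTrace P ξ = 0 := by
  intro ξ
  by_cases hfd : FiniteDimensional ℂ H
  swap
  · rw [berryTrace, LinearMap.trace_eq_zero_of_not_finiteDimensional hfd, LinearMap.zero_apply]
  set K : H ≃ₛₗᵢ[starRingEnd ℂ] H := C.trans J.symm
  have hK : ∀ η x, K (P η x) = P η (K x) := fun η x =>
    J.symm_apply_eq.mpr <| show C (P η x) = J (P η (J.symm (C x))) by
      rw [hC, hJ, J.apply_symm_apply]
  have hKD : ∀ v x, K (fderiv ℝ P ξ v x) = fderiv ℝ P ξ v (K x) :=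
    fderiv_apply_comm_of_forall_comm (hdiff ξ) ((K : H →+ H).toRealLinearMap K.continuous) hK
  have hreal := LinearMap.conj_trace_eq_of_antiunitary_comm K
    (P ξ ∘L (fderiv ℝ P ξ (1, 0) ∘L fderiv ℝ P ξ (0, 1) -
      fderiv ℝ P ξ (0, 1) ∘L fderiv ℝ P ξ (1, 0))).toLinearMap
    fun x => by simp [hK, hKD]
  have himag := ContinuousLinearMap.conj_trace_mul_commutator (hsa ξ)
    (isSelfAdjoint_fderiv_apply (𝕜 := ℝ) hsa ξ (1, 0))
    (isSelfAdjoint_fderiv_apply (𝕜 := ℝ) hsa ξ (0, 1))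
  exact self_eq_neg.mp (hreal.symm.trans himag)

/-- If a smooth family of finite-rank orthogonal projections `P(ξ)` is intertwined with
`P(−ξ)` both by an antiunitary operator `C` and by a unitary operator `J`, then the
Berry curvature trace `B(ξ) = Tr(P(ξ)[∂₁P(ξ), ∂₂P(ξ)])` vanishes identically. -/
theorem berryTrace_eq_zero_of_symmetries {H : Type*} [NormedAddCommGroup H]
    [InnerProductSpace ℂ H] [CompleteSpace H]
    (P : ℝ × ℝ → H →L[ℂ] H)
    (hsa : ∀ ξ, IsSelfAdjoint (P ξ))
    (hproj : ∀ ξ, P ξ ∘L P ξ = P ξ)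
    (hfin : ∀ ξ, FiniteDimensional ℂ (LinearMap.range (P ξ).toLinearMap))
    (hdiff : Differentiable ℝ P)
    (C : H ≃ₛₗᵢ[starRingEnd ℂ] H)
    (hC : ∀ ξ x, C (P ξ x) = P (-ξ) (C x))
    (J : H ≃ₗᵢ[ℂ] H)
    (hJ : ∀ ξ x, J (P ξ x) = P (-ξ) (J x)) :
    ∀ ξ : ℝ × ℝ, berryTrace P ξ = 0 :=
  berryTrace_eq_zero_of_symmetries_general P hsa hdiff C hC J hJ
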